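/- There exist a level l ∈ {weak, strong} and a history H over the operations of the append-only sequence data type F_seq such that H satisfies FEC(l, F_seq) but does not satisfy BEC(l, F_seq); hence the parametrized guarantee FEC(l, F) is strictly weaker than BEC(l, F). -/

import Mathlib

set_option autoImplicit false

/-- Consistency levels. -/
inductive Lvl : Type
  | weak
  | strong
  deriving DecidableEq

/-- A history `H = (E, op, rval, rb, ss, lvl)`.  The value `none` of `rval`
plays the role of the distinguished symbol `∇` (a pending operation). -/
structure History (E Op Val : Type) : Type where
  op : E → Op
  rval : E → Option Val
  rb : E → E → Prop
  ss : E → E → Prop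
  lvl : E → Lvl
  countable : Countable E
  rb_irrefl : ∀ a, ¬ rb a a
  rb_trans : ∀ a b c, rb a b → rb b c → rb a c
  rb_finite_preds : ∀ e, {e' | rb e' e}.Finite
  rb_ret : ∀ a b, rb a b → rval a ≠ none
  rb_interval : ∀ a b c d, rb a b → rb c d → rb a d ∨ rb c b
  ss_equiv : Equivalence ss
  ss_rb_total : ∀ a b, ss a b → a ≠ b → rb a b ∨ rb b a

/-- An abstract execution `A = (H, vis, ar, par)`. -/
structure AExec (E Op Val : Type) extends History E Op Val : Type where
  vis : E → E → Prop
  ar : E → E → Prop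
  par : E → E → E → Prop
  vis_acyclic : ∀ e, ¬ Relation.TransGen vis e e
  vis_finite_preds : ∀ e, {e' | vis e' e}.Finite
  ar_irrefl : ∀ a, ¬ ar a a
  ar_trans : ∀ a b c, ar a b → ar b c → ar a c
  ar_total : ∀ a b, a ≠ b → ar a b ∨ ar b a
  par_irrefl : ∀ e a, ¬ par e a a
  par_trans : ∀ e a b c, par e a b → par e b c → par e a c
  par_total : ∀ e a b, a ≠ b → par e a b ∨ par e b a

/-- An operation context `C = (E_C, op, vis, ar)`:
a finite set of events with operations, visibility, and a strict total
arbitration order. -/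
structure OpContext (Op : Type) : Type 1 where
  carrier : Type
  finite : Finite carrier
  op : carrier → Op
  vis : carrier → carrier → Prop
  ar : carrier → carrier → Prop
  ar_irrefl : ∀ a, ¬ ar a a
  ar_trans : ∀ a b c, ar a b → ar b c → ar a c
  ar_total : ∀ a b, a ≠ b → ar a b ∨ ar b a

namespace OpContext

variable {Op : Type}

/-- Isomorphism of operation contexts. -/
structure Iso (C C' : OpContext Op) where
  toEquiv : C.carrier ≃ C'.carrier
  map_op : ∀ x, C'.op (toEquiv x) = C.op x
  map_vis : ∀ x y, C.vis x y ↔ C'.vis (toEquiv x) (toEquiv y)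
  map_ar : ∀ x y, C.ar x y ↔ C'.ar (toEquiv x) (toEquiv y)

/-- The restriction of a context to a subset of its events. -/
def restrict (C : OpContext Op) (S : Set C.carrier) : OpContext Op where
  carrier := {x : C.carrier // x ∈ S}
  finite := by haveI := C.finite; exact Subtype.finite
  op := fun x => C.op x.1
  vis := fun x y => C.vis x.1 y.1
  ar := fun x y => C.ar x.1 y.1
  ar_irrefl := fun a => C.ar_irrefl a.1
  ar_trans := fun a b c hab hbc => C.ar_trans a.1 b.1 c.1 hab hbc
  ar_total := fun a b h => C.ar_total a.1 b.1 (fun hh => h (Subtype.ext hh))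

/-- The events of a context, listed in ascending arbitration order. -/
noncomputable def sortedEvents (C : OpContext Op) : List C.carrier := by
  haveI := C.finite
  letI : Fintype C.carrier := Fintype.ofFinite _
  letI le : C.carrier → C.carrier → Prop := fun a b => a = b ∨ C.ar a b
  haveI : DecidableRel le := Classical.decRel _
  haveI : IsTrans C.carrier le := ⟨by
    rintro a b c (rfl | hab) (rfl | hbc)
    · exact Or.inl rfl
    · exact Or.inr hbc
    · exact Or.inr hab
    · exact Or.inr (C.ar_trans _ _ _ hab hbc)⟩
  haveI : IsAntisymm C.carrier le := ⟨by
    rintro a b (rfl | hab) (h | hba)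
    · rfl
    · rfl
    · exact h.symm
    · exact absurd (C.ar_trans _ _ _ hab hba) (C.ar_irrefl a)⟩
  haveI : IsTotal C.carrier le := ⟨by
    intro a b
    by_cases h : a = b
    · exact Or.inl (Or.inl h)
    · rcases C.ar_total a b h with h' | h'
      · exact Or.inl (Or.inr h')
      · exact Or.inr (Or.inr h')⟩
  exact Finset.univ.sort le

end OpContext

/-- `rank B rel x` is the number of `y ∈ B` with `rel y x`. -/
noncomputable def rank {E : Type} (B : Set E) (r : E → E → Prop) (x : E) : ℕ :=
  {y ∈ B | r y x}.ncard

namespace AExec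

variable {E Op Val : Type}

/-- Session order `so := rb ∩ ss`. -/
def so (A : AExec E Op Val) (a b : E) : Prop := A.rb a b ∧ A.ss a b

/-- Happens-before `hb := (so ∪ vis)⁺`. -/
def hb (A : AExec E Op Val) : E → E → Prop :=
  Relation.TransGen (fun a b => A.so a b ∨ A.vis a b)

/-- The set `vis⁻¹(e)` of visibility predecessors of `e`. -/
def visPreds (A : AExec E Op Val) (e : E) : Set E := {x | A.vis x e}

/-- The operation context of an event: its visibility predecessors together
with the final arbitration order. -/
def context (A : AExec E Op Val) (e : E) : OpContext Op where
  carrier := {x : E // A.vis x e}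
  finite := (A.vis_finite_preds e).to_subtype
  op := fun x => A.op x.1
  vis := fun x y => A.vis x.1 y.1
  ar := fun x y => A.ar x.1 y.1
  ar_irrefl := fun a => A.ar_irrefl a.1
  ar_trans := fun a b c h1 h2 => A.ar_trans a.1 b.1 c.1 h1 h2
  ar_total := fun a b h => A.ar_total a.1 b.1 (fun hh => h (Subtype.ext hh))

/-- The fluctuating operation context of an event: its visibility predecessors
together with the arbitration order `par e` as perceived by `e`. -/
def fcontext (A : AExec E Op Val) (e : E) : OpContext Op where
  carrier := {x : E // A.vis x e}
  finite := (A.vis_finite_preds e).to_subtype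
  op := fun x => A.op x.1
  vis := fun x y => A.vis x.1 y.1
  ar := fun x y => A.par e x.1 y.1
  ar_irrefl := fun a => A.par_irrefl e a.1
  ar_trans := fun a b c h1 h2 => A.par_trans e a.1 b.1 c.1 h1 h2
  ar_total := fun a b h => A.par_total e a.1 b.1 (fun hh => h (Subtype.ext hh))

/-- Eventual visibility. -/
def EV (A : AExec E Op Val) : Prop :=
  ∀ e, {e' | A.rb e e' ∧ ¬ A.vis e e'}.Finite

/-- No circular causality: `hb` is acyclic. -/
def NCC (A : AExec E Op Val) : Prop := ∀ e, ¬ A.hb e e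

/-- Return value consistency. -/
def RVal (F : Op → OpContext Op → Val) (A : AExec E Op Val) : Prop :=
  ∀ e, A.rval e = some (F (A.op e) (A.context e))

/-- Fluctuating return value consistency. -/
def FRVal (F : Op → OpContext Op → Val) (A : AExec E Op Val) : Prop :=
  ∀ e, A.rval e = some (F (A.op e) (A.fcontext e))

/-- Convergent perceived arbitration. -/
def CPar (A : AExec E Op Val) : Prop :=
  ∀ e, {e' | A.vis e e' ∧
    rank (A.visPreds e') (A.par e') e ≠ rank (A.visPreds e') A.ar e}.Finite

/-- Basic eventual consistency. -/
def BEC (F : Op → OpContext Op → Val) (A : AExec E Op Val) : Prop :=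
  A.EV ∧ A.NCC ∧ A.RVal F

/-- Fluctuating eventual consistency. -/
def FEC (F : Op → OpContext Op → Val) (A : AExec E Op Val) : Prop :=
  A.EV ∧ A.NCC ∧ A.FRVal F ∧ A.CPar

/-- Single order (unparametrized): `vis = ar \ (E' × E)` for some set `E'`
of pending events. -/
def SinOrd (A : AExec E Op Val) : Prop :=
  ∃ E' : Set E, (∀ x ∈ E', A.rval x = none) ∧
    ∀ x y, A.vis x y ↔ (A.ar x y ∧ x ∉ E')

/-- Parametrized eventual visibility. -/
def EVL (A : AExec E Op Val) (l : Lvl) : Prop :=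
  ∀ e, {e' | A.lvl e' = l ∧ A.rb e e' ∧ ¬ A.vis e e'}.Finite

/-- Parametrized no circular causality: `hb ∩ (L × L)` is acyclic. -/
def NCCL (A : AExec E Op Val) (l : Lvl) : Prop :=
  ∀ e, ¬ Relation.TransGen (fun a b => A.hb a b ∧ A.lvl a = l ∧ A.lvl b = l) e e

/-- Parametrized return value consistency. -/
def RValL (F : Op → OpContext Op → Val) (A : AExec E Op Val) (l : Lvl) : Prop :=
  ∀ e, A.lvl e = l → A.rval e = some (F (A.op e) (A.context e))

/-- Parametrized fluctuating return value consistency. -/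
def FRValL (F : Op → OpContext Op → Val) (A : AExec E Op Val) (l : Lvl) : Prop :=
  ∀ e, A.lvl e = l → A.rval e = some (F (A.op e) (A.fcontext e))

/-- Parametrized convergent perceived arbitration. -/
def CParL (A : AExec E Op Val) (l : Lvl) : Prop :=
  ∀ e, {e' | A.lvl e' = l ∧ A.vis e e' ∧
    rank (A.visPreds e') (A.par e') e ≠ rank (A.visPreds e') A.ar e}.Finite

/-- Parametrized basic eventual consistency `BEC(l, F)`. -/
def BECL (F : Op → OpContext Op → Val) (A : AExec E Op Val) (l : Lvl) : Prop :=
  A.EVL l ∧ A.NCCL l ∧ A.RValL F l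

/-- Parametrized fluctuating eventual consistency `FEC(l, F)`. -/
def FECL (F : Op → OpContext Op → Val) (A : AExec E Op Val) (l : Lvl) : Prop :=
  A.EVL l ∧ A.NCCL l ∧ A.FRValL F l ∧ A.CParL l

/-- Parametrized single order `SinOrd(l)`:
`vis ∩ (E × L) = (ar ∩ (E × L)) \ (E' × E)` for some set `E'` of pending
events. -/
def SinOrdL (A : AExec E Op Val) (l : Lvl) : Prop :=
  ∃ E' : Set E, (∀ x ∈ E', A.rval x = none) ∧
    ∀ x y, A.lvl y = l → (A.vis x y ↔ (A.ar x y ∧ x ∉ E'))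

/-- Parametrized session arbitration `SessArb(l)`: `so ∩ (E × L) ⊆ ar`. -/
def SessArbL (A : AExec E Op Val) (l : Lvl) : Prop :=
  ∀ x y, A.so x y → A.lvl y = l → A.ar x y

/-- Parametrized real-time order `RT(l)`: `rb ∩ (L × L) ⊆ ar`. -/
def RTL (A : AExec E Op Val) (l : Lvl) : Prop :=
  ∀ x y, A.lvl x = l → A.lvl y = l → A.rb x y → A.ar x y

/-- Parametrized sequential consistency `Seq(l, F)`. -/
def SeqL (F : Op → OpContext Op → Val) (A : AExec E Op Val) (l : Lvl) : Prop :=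
  A.SinOrdL l ∧ A.SessArbL l ∧ A.BECL F l

/-- Parametrized linearizability `Lin(l, F)`. -/
def LinL (F : Op → OpContext Op → Val) (A : AExec E Op Val) (l : Lvl) : Prop :=
  A.SinOrdL l ∧ A.RTL l ∧ A.BECL F l

end AExec

/-- A history satisfies a consistency guarantee `P` iff it can be extended by
`vis`, `ar`, `par` to an abstract execution satisfying `P`. -/
def History.sat {E Op Val : Type} (H : History E Op Val)
    (P : AExec E Op Val → Prop) : Prop :=
  ∃ A : AExec E Op Val, A.toHistory = H ∧ P A

/-- A replicated data type: a return value for every operation and every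
operation context, invariant under isomorphism of contexts. -/
structure RDT (Op Val : Type) : Type 1 where
  F : Op → OpContext Op → Val
  iso_inv : ∀ (o : Op) (C C' : OpContext Op), Nonempty (C.Iso C') → F o C = F o C'

/-- An operation is read-only for `F` iff removing any event performing it
from any context does not change the value of any operation. -/
def isReadOnly {Op Val : Type} (F : Op → OpContext Op → Val) (o : Op) : Prop :=
  ∀ (o' : Op) (C : OpContext Op) (e : C.carrier), C.op e = o →
    F o' C = F o' (C.restrict {x | x ≠ e})

/-! ### The append-only sequence data type `F_seq` -/

/-- The 26-letter alphabet `{a, …, z}`. -/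
abbrev Letter : Type := Fin 26

/-- Words over the alphabet. -/
abbrev Word : Type := List Letter

/-- Operations of the append-only sequence data type. -/
inductive SeqOp : Type
  | append (s : Word)
  | read

/-- Return values of the append-only sequence data type. -/
inductive SeqVal : Type
  | ok
  | word (w : Word)

/-- The word returned by `read`: the concatenation, in ascending arbitration
order, of the words appended by the append events of the context. -/
noncomputable def seqReadWord (C : OpContext SeqOp) : Word :=
  (C.sortedEvents.map C.op).foldr
    (fun o w => match o with
      | SeqOp.append s => s ++ w
      | SeqOp.read => w) []

/-- The append-only sequence replicated data type `F_seq`. -/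
noncomputable def Fseq : SeqOp → OpContext SeqOp → SeqVal
  | SeqOp.append _, _ => SeqVal.ok
  | SeqOp.read, C => SeqVal.word (seqReadWord C)

/-! ### The non-negative counter data type `F_NNC` -/

/-- Operations of the non-negative counter. -/
inductive NNCOp : Type
  | add (v : ℕ)
  | subtract (v : ℕ)
  | get

/-- Return values of the non-negative counter. -/
inductive NNCVal : Type
  | ok
  | bool (b : Bool)
  | int (n : ℤ)

/-- One step of the fold computing the counter value. -/
def fNNC (x : ℤ) : NNCOp → ℤ
  | NNCOp.add v => x + v
  | NNCOp.subtract v => if (v : ℤ) ≤ x then x - v else x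
  | NNCOp.get => x

/-- The value of the counter in a context: fold `fNNC` starting from `0`
over the operations of the context taken in ascending arbitration order. -/
noncomputable def nncVal (C : OpContext NNCOp) : ℤ :=
  (C.sortedEvents.map C.op).foldl fNNC 0

/-- The non-negative counter replicated data type `F_NNC`. -/
noncomputable def Fnnc : NNCOp → OpContext NNCOp → NNCVal
  | NNCOp.add _, _ => NNCVal.ok
  | NNCOp.subtract v, C => NNCVal.bool (decide ((v : ℤ) ≤ nncVal C))
  | NNCOp.get, C => NNCVal.int (nncVal C)

/-!
Two concurrent appends of `a` and `b` (the letters `0` and `1`) are both visible to two reads,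
which return `ab` and `ba`. Under `FEC` each read computes its value from its own perceived
arbitration order (`perceivedOrder`), so both answers are legal; under `BEC` both are computed from
the one arbitration order `ar`, which would have to put `a` before `b` and `b` before `a`.
Eventual visibility and convergence of perceived arbitration are finiteness conditions, so they
hold trivially for this finite history.
-/

open scoped List

namespace OpContext

variable {Op : Type} (C : OpContext Op)

instance : Std.Irrefl C.ar := ⟨C.ar_irrefl⟩

instance : Std.Antisymm C.ar :=
  ⟨fun a _ hab hba => (C.ar_irrefl a (C.ar_trans _ _ _ hab hba)).elim⟩

theorem mem_sortedEvents_and_pairwise :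
    (∀ x, x ∈ C.sortedEvents) ∧ C.sortedEvents.Pairwise C.ar := by
  have := C.finite
  let : Fintype C.carrier := Fintype.ofFinite _
  let : DecidableRel (fun a b : C.carrier => a = b ∨ C.ar a b) := Classical.decRel _
  have : IsTrans C.carrier (fun a b => a = b ∨ C.ar a b) := ⟨by
    rintro a b c (rfl | hab) (rfl | hbc)
    · exact Or.inl rfl
    · exact Or.inr hbc
    · exact Or.inr hab
    · exact Or.inr (C.ar_trans _ _ _ hab hbc)⟩
  have : Std.Antisymm (fun a b : C.carrier => a = b ∨ C.ar a b) := ⟨by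
    rintro a b (rfl | hab) (h | hba)
    · rfl
    · rfl
    · exact h.symm
    · exact absurd (C.ar_trans _ _ _ hab hba) (C.ar_irrefl a)⟩
  have : Std.Total (fun a b : C.carrier => a = b ∨ C.ar a b) := ⟨fun a b => by
    by_cases h : a = b
    · exact Or.inl (Or.inl h)
    · exact (C.ar_total a b h).imp Or.inr Or.inr⟩
  unfold sortedEvents
  refine ⟨fun x => (Finset.mem_sort _).2 (Finset.mem_univ x), ?_⟩
  exact ((Finset.pairwise_sort _ _).and (Finset.sort_nodup _ _)).imp
    fun ⟨hle, hne⟩ => hle.resolve_left hne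

theorem mem_sortedEvents (x : C.carrier) : x ∈ C.sortedEvents :=
  C.mem_sortedEvents_and_pairwise.1 x

theorem pairwise_sortedEvents : C.sortedEvents.Pairwise C.ar :=
  C.mem_sortedEvents_and_pairwise.2

variable {C}

theorem sortedEvents_eq_of_pairwise {l : List C.carrier} (hl : l.Pairwise C.ar)
    (hmem : ∀ x, x ∈ l) : C.sortedEvents = l :=
  C.pairwise_sortedEvents.eq_of_mem_iff hl fun x => by simp only [mem_sortedEvents, hmem]

theorem pair_sublist_sortedEvents {x y : C.carrier} (h : C.ar x y) :
    [x, y] <+ C.sortedEvents := by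
  have hxy : x ≠ y := fun hxy => C.ar_irrefl x (hxy ▸ h)
  refine List.sublist_of_subperm_of_pairwise ?_ (by simpa using h) C.pairwise_sortedEvents
  exact List.subperm_of_subset (by simpa using hxy) fun z _ => C.mem_sortedEvents z

end OpContext

@[simp]
def SeqOp.appended : SeqOp → Word
  | .append s => s
  | .read => []

theorem seqReadWord_eq_flatten (C : OpContext SeqOp) :
    seqReadWord C = (C.sortedEvents.map fun x => (C.op x).appended).flatten := by
  unfold seqReadWord
  induction C.sortedEvents with
  | nil => rfl
  | cons x l ih => cases h : C.op x <;> simp [h, ih]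

theorem seqReadWord_eq_of_forall_eq_or_eq {C : OpContext SeqOp} {x y : C.carrier}
    (hxy : C.ar x y) (hall : ∀ z, z = x ∨ z = y) :
    seqReadWord C = (C.op x).appended ++ (C.op y).appended := by
  have hmem : ∀ z, z ∈ [x, y] := fun z => by rcases hall z with rfl | rfl <;> simp
  rw [seqReadWord_eq_flatten, OpContext.sortedEvents_eq_of_pairwise (by simpa using hxy) hmem]
  simp

theorem append_sublist_seqReadWord {C : OpContext SeqOp} {x y : C.carrier} (h : C.ar x y) :
    (C.op x).appended ++ (C.op y).appended <+ seqReadWord C := by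
  rw [seqReadWord_eq_flatten]
  simpa using ((OpContext.pair_sublist_sortedEvents h).map fun z => (C.op z).appended).flatten

theorem exists_mem_appended_of_mem_seqReadWord {C : OpContext SeqOp} {c : Letter}
    (h : c ∈ seqReadWord C) : ∃ x, c ∈ (C.op x).appended := by
  rw [seqReadWord_eq_flatten] at h
  simpa [OpContext.mem_sortedEvents] using h

namespace AExec

variable {E Op Val : Type}

theorem NCC.nccl {A : AExec E Op Val} (h : A.NCC) (l : Lvl) : A.NCCL l := fun e he =>
  h e <| Relation.TransGen.lift' id (fun _ _ hab => hab.1) _ _ he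

theorem seqReadWord_context_of_rval_eq_word (A : AExec E SeqOp SeqVal) {l : Lvl}
    (hrval : A.RValL Fseq l) {e : E} {w : Word} (hl : A.lvl e = l)
    (hw : A.rval e = some (.word w)) : seqReadWord (A.context e) = w := by
  have h := hrval e hl
  rw [hw] at h
  cases hop : A.op e <;> simp [hop, Fseq] at h
  exact h.symm

variable (A : AExec E SeqOp Val)

theorem exists_vis_of_mem_seqReadWord_context {e : E} {c : Letter}
    (h : c ∈ seqReadWord (A.context e)) : ∃ x, A.vis x e ∧ c ∈ (A.op x).appended :=
  let ⟨x, hx⟩ := exists_mem_appended_of_mem_seqReadWord h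
  ⟨x.1, x.2, hx⟩

theorem append_sublist_seqReadWord_context {x y e : E} (hx : A.vis x e) (hy : A.vis y e)
    (h : A.ar x y) : (A.op x).appended ++ (A.op y).appended <+ seqReadWord (A.context e) :=
  append_sublist_seqReadWord (C := A.context e) (x := ⟨x, hx⟩) (y := ⟨y, hy⟩) h

end AExec

def conflictingReads : History (Fin 4) SeqOp SeqVal where
  op := ![.append [0], .append [1], .read, .read]
  rval := ![some .ok, some .ok, some (.word [0, 1]), some (.word [1, 0])]
  rb _ _ := False
  ss := Eq
  lvl _ := .weak
  countable := inferInstance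
  rb_irrefl _ := id
  rb_trans _ _ _ h := h.elim
  rb_finite_preds _ := Set.toFinite _
  rb_ret _ _ h := h.elim
  rb_interval _ _ _ _ h := h.elim
  ss_equiv := eq_equivalence
  ss_rb_total _ _ h hne := (hne h).elim

def perceivedOrder (e : Fin 4) : Equiv.Perm (Fin 4) :=
  if e = 3 then Equiv.swap 0 1 else 1

def conflictingReadsExec : AExec (Fin 4) SeqOp SeqVal where
  toHistory := conflictingReads
  vis x y := x < 2 ∧ 2 ≤ y
  ar := (· < ·)
  par e a b := perceivedOrder e a < perceivedOrder e b
  vis_acyclic e he := lt_irrefl e <| Relation.transGen_eq_self.le _ _ <|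
    Relation.TransGen.lift id (fun _ _ h => h.1.trans_le h.2) _ _ he
  vis_finite_preds _ := Set.toFinite _
  ar_irrefl := lt_irrefl
  ar_trans _ _ _ := lt_trans
  ar_total _ _ := Ne.lt_or_gt
  par_irrefl _ _ := lt_irrefl _
  par_trans _ _ _ _ := lt_trans
  par_total e _ _ h := ((perceivedOrder e).injective.ne h).lt_or_gt

theorem conflictingReadsExec_ncc : conflictingReadsExec.NCC := by
  intro e he
  refine conflictingReadsExec.vis_acyclic e (Relation.TransGen.mono ?_ _ _ he)
  rintro a b (⟨hrb, -⟩ | hab)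
  · exact (show False from hrb).elim
  · exact hab

theorem conflictingReadsExec_seqReadWord_fcontext {e x y : Fin 4} (he : 2 ≤ e)
    (hx : x < 2) (hy : y < 2) (hxy : perceivedOrder e x < perceivedOrder e y) :
    seqReadWord (conflictingReadsExec.fcontext e) =
      (conflictingReads.op x).appended ++ (conflictingReads.op y).appended := by
  have hne : x ≠ y := fun h => (h ▸ hxy).false
  refine seqReadWord_eq_of_forall_eq_or_eq (C := conflictingReadsExec.fcontext e)
    (x := ⟨x, hx, he⟩) (y := ⟨y, hy, he⟩) hxy ?_
  rintro ⟨z, hz⟩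
  have : z = x ∨ z = y := by have := hz.1; omega
  exact this.imp Subtype.ext Subtype.ext

theorem conflictingReadsExec_frval : conflictingReadsExec.FRValL Fseq .weak := by
  intro e _
  fin_cases e
  · simp [conflictingReadsExec, conflictingReads, Fseq]
  · simp [conflictingReadsExec, conflictingReads, Fseq]
  · change some (SeqVal.word [0, 1]) = some (Fseq .read (conflictingReadsExec.fcontext 2))
    rw [Fseq, conflictingReadsExec_seqReadWord_fcontext (x := 0) (y := 1) le_rfl
      (by decide) (by decide) (by decide)]
    rfl
  · change some (SeqVal.word [1, 0]) = some (Fseq .read (conflictingReadsExec.fcontext 3))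
    rw [Fseq, conflictingReadsExec_seqReadWord_fcontext (x := 1) (y := 0) (by decide)
      (by decide) (by decide) (by decide)]
    rfl

theorem conflictingReadsExec_fecl : conflictingReadsExec.FECL Fseq .weak :=
  ⟨fun _ => Set.toFinite _, conflictingReadsExec_ncc.nccl _, conflictingReadsExec_frval,
    fun _ => Set.toFinite _⟩

theorem conflictingReads_vis_of_mem_seqReadWord {A : AExec (Fin 4) SeqOp SeqVal}
    (hA : A.toHistory = conflictingReads) {e x : Fin 4} {c : Letter}
    (hx : conflictingReads.op x = .append [c]) (h : c ∈ seqReadWord (A.context e)) :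
    A.vis x e := by
  obtain ⟨y, hy, hcy⟩ := A.exists_vis_of_mem_seqReadWord_context h
  rw [hA] at hcy
  obtain rfl : y = x := by
    fin_cases x <;> fin_cases y <;> simp_all [conflictingReads]
  exact hy

theorem conflictingReads_ar_of_read {A : AExec (Fin 4) SeqOp SeqVal}
    (hA : A.toHistory = conflictingReads) (hrval : A.RValL Fseq .weak) {e x y : Fin 4}
    {c d : Letter}    (hcd : c ≠ d) (hx : conflictingReads.op x = .append [c])
    (hy : conflictingReads.op y = .append [d])
    (hw : conflictingReads.rval e = some (.word [c, d])) : A.ar x y := by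
  have hread : seqReadWord (A.context e) = [c, d] :=
    A.seqReadWord_context_of_rval_eq_word hrval (congrArg (·.lvl e) hA) (hA ▸ hw)
  have hvx : A.vis x e := conflictingReads_vis_of_mem_seqReadWord hA hx (by simp [hread])
  have hvy : A.vis y e := conflictingReads_vis_of_mem_seqReadWord hA hy (by simp [hread])
  have hxy : x ≠ y := by rintro rfl; exact hcd (by simpa [hx] using hy)
  refine (A.ar_total x y hxy).resolve_right fun hyx => hcd ?_
  have h := A.append_sublist_seqReadWord_context hvy hvx hyx
  rw [hread, hA, hx, hy] at h
  have : d = c ∧ c = d := by simpa using h.eq_of_length (by simp)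
  exact this.2

theorem conflictingReads_not_sat_becl : ¬ conflictingReads.sat (fun A => A.BECL Fseq .weak) := by
  rintro ⟨A, hA, -, -, hrval⟩
  have h01 : A.ar 0 1 := conflictingReads_ar_of_read hA hrval (e := 2) (by decide) rfl rfl rfl
  have h10 : A.ar 1 0 := conflictingReads_ar_of_read hA hrval (e := 3) (by decide) rfl rfl rfl
  exact A.ar_irrefl 0 (A.ar_trans 0 1 0 h01 h10)

/-- There exist a level `l` and a history over the operations
of the append-only sequence data type `F_seq` that satisfies `FEC(l, F_seq)`
but not `BEC(l, F_seq)`; hence `FEC(l, F)` is strictly weaker than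
`BEC(l, F)`. -/
theorem fecl_strictly_weaker_than_becl :
    ∃ (l : Lvl) (E : Type) (H : History E SeqOp SeqVal),
      H.sat (fun A => A.FECL Fseq l) ∧ ¬ H.sat (fun A => A.BECL Fseq l) :=
  ⟨.weak, Fin 4, conflictingReads, ⟨conflictingReadsExec, rfl, conflictingReadsExec_fecl⟩,
    conflictingReads_not_sat_becl⟩
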